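/- Assume every root of the characteristic polynomial f has modulus strictly less than 1. Then for every ε > 0 and every initial data x_0,…,x_{p−1} ∈ ℝ, lim_{t→∞} d_TV( N(x_t, ε²σ_t²), N(0, ε²σ_∞²) ) = 0; that is, the random linear recurrence converges in total variation, as t → ∞, to a Gaussian random variable with mean 0 and variance ε²σ_∞² ∈ [ε², +∞). -/

import Mathlib

open MeasureTheory ProbabilityTheory Filter Real

/-- The Gaussian distribution on ℝ with mean `m` and variance `v ≥ 0`. -/
noncomputable def gauss (m v : ℝ) : Measure ℝ := gaussianReal m v.toNNReal

/-- Total variation distance between two measures on ℝ: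
`d_TV(μ,ν) = sup_{A measurable} |μ(A) − ν(A)|`. -/
noncomputable def dTV (μ ν : Measure ℝ) : ℝ :=
  ⨆ A : {A : Set ℝ // MeasurableSet A}, |(μ A.1).toReal - (ν A.1).toReal|
/-- The inner sum Σ_{(k₁,…,k_p)∈ℕ₀^p, k₁+⋯+k_p=s} λ₁^{k₁}⋯λ_p^{k_p}. -/
noncomputable def hSum (p : ℕ) (lam : Fin p → ℂ) (s : ℕ) : ℂ :=
  ∑ k ∈ Finset.Nat.antidiagonalTuple p s, ∏ j, lam j ^ k j

/-- σ_t² = Σ_{s=0}^{t−p} ( Σ_{k₁+⋯+k_p=s} λ₁^{k₁}⋯λ_p^{k_p} )², a real number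
(each inner sum is a real number since the φ_i are real, so its square equals
the square of its modulus). -/
noncomputable def sigmaSq (p : ℕ) (lam : Fin p → ℂ) (t : ℕ) : ℝ :=
  ∑ s ∈ Finset.range (t - p + 1), ‖hSum p lam s‖ ^ 2

/-!
Factoring the characteristic polynomial as `∏ (X - λⱼ)` writes the recurrence as a composition
of first-order difference operators `u ↦ u (t + 1) - λ u t` annihilating `x`; peeling them off
one at a time, each `|λ| < 1` propagates convergence to `0`, so `x t → 0`. The variances
`ε² σ_t²` converge to `ε² σ_∞² ≥ ε² > 0`, so the Gaussian densities converge pointwise, Scheffé's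
lemma upgrades this to `L¹` convergence, and the `L¹` distance of densities bounds the total
variation distance.
-/

lemma tendsto_zero_of_le_mul_add {r e : ℕ → ℝ} {b : ℝ} (hb0 : 0 ≤ b) (hb : b < 1)
    (hr0 : ∀ t, 0 ≤ r t) (hr : ∀ t, r (t + 1) ≤ b * r t + e t)
    (he : Tendsto e atTop (nhds 0)) : Tendsto r atTop (nhds 0) := by
  refine tendsto_order.2 ⟨fun a ha => Eventually.of_forall fun t => ha.trans_le (hr0 t),
    fun ε hε => ?_⟩
  obtain ⟨T, hT⟩ := eventually_atTop.1
    (he.eventually (ge_mem_nhds (mul_pos (sub_pos.2 hb) (half_pos hε))))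
  set D := ε / 2 with hD
  -- `D` is a fixed point of `r ↦ b * r + (1 - b) * D`, so `r - D` contracts by `b` once `t ≥ T`.
  have hcontract : ∀ n, r (n + T) - D ≤ b ^ n * (r T - D) := by
    intro n
    induction n with
    | zero => simp
    | succ n ih =>
      calc r (n + 1 + T) - D ≤ b * (r (n + T) - D) := by
            rw [add_right_comm]
            linarith [hr (n + T), hT (n + T) (Nat.le_add_left T n)]
        _ ≤ b * (b ^ n * (r T - D)) := mul_le_mul_of_nonneg_left ih hb0
        _ = b ^ (n + 1) * (r T - D) := by ring
  have hsmall : ∀ᶠ n in atTop, b ^ n * (r T - D) < D := by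
    refine ((tendsto_pow_atTop_nhds_zero_of_lt_one hb0 hb).mul_const _).eventually
      (gt_mem_nhds ?_)
    rw [zero_mul]
    exact half_pos hε
  obtain ⟨N, hN⟩ := eventually_atTop.1 hsmall
  refine eventually_atTop.2 ⟨N + T, fun t ht => ?_⟩
  obtain ⟨n, rfl⟩ : ∃ n, t = n + T := ⟨t - T, by omega⟩
  linarith [hcontract n, hN n (by omega)]

lemma tendsto_zero_of_tendsto_sub_mul {R : Type*} [SeminormedRing R] {a : R} (ha : ‖a‖ < 1)
    {u : ℕ → R} (h : Tendsto (fun t => u (t + 1) - a * u t) atTop (nhds 0)) :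
    Tendsto u atTop (nhds 0) := by
  refine tendsto_zero_iff_norm_tendsto_zero.2
    (tendsto_zero_of_le_mul_add (norm_nonneg a) ha (fun t => norm_nonneg _) (fun t => ?_)
      (tendsto_zero_iff_norm_tendsto_zero.1 h))
  calc ‖u (t + 1)‖ ≤ ‖a * u t‖ + ‖u (t + 1) - a * u t‖ := norm_le_norm_add_norm_sub' _ _
    _ ≤ ‖a‖ * ‖u t‖ + ‖u (t + 1) - a * u t‖ := by gcongr; exact norm_mul_le _ _

section SeqShift

open Polynomial

variable (R : Type*) [CommRing R]

noncomputable def seqShift : Module.End R (ℕ → R) := LinearMap.funLeft R R (· + 1)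

variable {R}

lemma seqShift_pow_apply (n : ℕ) (u : ℕ → R) (t : ℕ) : (seqShift R ^ n) u t = u (t + n) := by
  induction n generalizing u with
  | zero => rfl
  | succ n ih => rw [pow_succ, Module.End.mul_apply, ih]; rfl

lemma aeval_seqShift_X_sub_C (a : R) (u : ℕ → R) :
    aeval (seqShift R) (X - C a) u = fun t => u (t + 1) - a * u t := by
  ext t
  simp only [map_sub, aeval_X, aeval_C, LinearMap.sub_apply, Pi.sub_apply,
    Module.algebraMap_end_apply, Pi.smul_apply, smul_eq_mul]
  rfl

lemma tendsto_zero_of_aeval_seqShift_prod_eq_zero {R : Type*} [SeminormedCommRing R] {ι : Type*}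
    (s : Finset ι) {lam : ι → R} (hlam : ∀ j ∈ s, ‖lam j‖ < 1) {u : ℕ → R}
    (hu : aeval (seqShift R) (∏ j ∈ s, (X - C (lam j))) u = 0) :
    Tendsto u atTop (nhds 0) := by
  induction s using Finset.cons_induction generalizing u with
  | empty =>
    simp only [Finset.prod_empty, map_one, Module.End.one_apply] at hu
    exact hu ▸ tendsto_const_nhds
  | cons a s _ ih =>
    rw [Finset.prod_cons, mul_comm, map_mul, Module.End.mul_apply] at hu
    have hpeel := ih (fun j hj => hlam j (Finset.mem_cons_of_mem hj)) hu
    refine tendsto_zero_of_tendsto_sub_mul (hlam a (Finset.mem_cons_self a s)) ?_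
    rwa [aeval_seqShift_X_sub_C] at hpeel

end SeqShift

open Polynomial in
theorem tendsto_zero_of_linear_recurrence {p : ℕ} (φ : Fin p → ℝ) (lam : Fin p → ℂ)
    (hroots : ∀ z : ℂ,
      z ^ p - ∑ i : Fin p, (φ i : ℂ) * z ^ (p - 1 - i.val) = ∏ j, (z - lam j))
    (hH : ∀ j, ‖lam j‖ < 1) (x : ℕ → ℝ)
    (hrec : ∀ t : ℕ, x (t + p) = ∑ i : Fin p, φ i * x (t + p - 1 - i.val)) :
    Tendsto x atTop (nhds 0) := by
  set P : ℂ[X] := X ^ p - ∑ i : Fin p, C (φ i : ℂ) * X ^ (p - 1 - i.val)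
  have hP : P = ∏ j, (X - C (lam j)) :=
    Polynomial.funext fun z => by simpa [P, eval_prod, eval_finsetSum] using hroots z
  have hPx : aeval (seqShift ℂ) P (fun t => (x t : ℂ)) = 0 := by
    ext t
    have hidx : ∀ i : Fin p, t + p - 1 - i.val = t + (p - 1 - i.val) := fun i => by omega
    simp only [P, map_sub, map_pow, aeval_X, map_sum, map_mul, aeval_C, LinearMap.sub_apply,
      LinearMap.sum_apply, Module.End.mul_apply, Module.algebraMap_end_apply, Pi.sub_apply,
      Finset.sum_apply, Pi.smul_apply, smul_eq_mul, seqShift_pow_apply, Pi.zero_apply]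
    rw [hrec t, sub_eq_zero]
    push_cast
    simp only [hidx]
  have hx := tendsto_zero_of_aeval_seqShift_prod_eq_zero Finset.univ (fun j _ => hH j) (hP ▸ hPx)
  simpa [Function.comp_def] using (Complex.continuous_re.tendsto 0).comp hx

theorem tendsto_integral_abs_sub_of_tendsto_ae {α ι : Type*} [MeasurableSpace α] {μ : Measure α}
    {l : Filter ι} [l.IsCountablyGenerated] {f : ι → α → ℝ} {g : α → ℝ}
    (hf0 : ∀ n, 0 ≤ᵐ[μ] f n) (hf : ∀ n, Integrable (f n) μ) (hg : Integrable g μ)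
    (hint : ∀ n, ∫ x, f n x ∂μ = ∫ x, g x ∂μ)
    (hlim : ∀ᵐ x ∂μ, Tendsto (fun n => f n x) l (nhds (g x))) :
    Tendsto (fun n => ∫ x, |f n x - g x| ∂μ) l (nhds 0) := by
  -- Scheffé: since `∫ (f n - g) = 0`, the `L¹` distance is twice the integral of the
  -- negative part of `f n - g`, which is dominated by `|g|`.
  have hsplit : ∀ n, ∫ x, |f n x - g x| ∂μ = 2 * ∫ x, max (g x - f n x) 0 ∂μ := by
    intro n
    have habs : ∀ x, |f n x - g x| = (f n x - g x) + 2 * max (g x - f n x) 0 := fun x => by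
      rcases le_total (f n x) (g x) with h | h
      · rw [abs_of_nonpos (sub_nonpos.2 h), max_eq_left (sub_nonneg.2 h)]; ring
      · rw [abs_of_nonneg (sub_nonneg.2 h), max_eq_right (sub_nonpos.2 h)]; ring
    have hdiff : Integrable (fun x => f n x - g x) μ := (hf n).sub hg
    have hneg : Integrable (fun x => max (g x - f n x) 0) μ := (hg.sub (hf n)).pos_part
    simp_rw [habs]
    rw [integral_add hdiff (hneg.const_mul 2),
      integral_sub (hf n) hg, hint, sub_self, zero_add, integral_const_mul]
  simp_rw [hsplit]
  have hbound : ∀ n, ∀ᵐ x ∂μ, ‖max (g x - f n x) 0‖ ≤ |g x| := fun n =>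
    (hf0 n).mono fun x hx => by
      rw [Real.norm_eq_abs, abs_of_nonneg (le_max_right _ _)]
      exact max_le (by linarith [le_abs_self (g x), show (0 : ℝ) ≤ f n x from hx]) (abs_nonneg _)
  have hdom := tendsto_integral_filter_of_dominated_convergence (fun x => |g x|)
    (Eventually.of_forall fun n => (hg.sub (hf n)).pos_part.aestronglyMeasurable)
    (Eventually.of_forall hbound) hg.abs
    (hlim.mono fun x hx => by
      simpa using (tendsto_const_nhds.sub hx).max (tendsto_const_nhds (x := (0 : ℝ))))
  simpa using hdom.const_mul 2

lemma dTV_nonneg (μ ν : Measure ℝ) : 0 ≤ dTV μ ν :=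
  Real.iSup_nonneg fun _ => abs_nonneg _

lemma toReal_withDensity_ofReal_apply {ν : Measure ℝ} {f : ℝ → ℝ} (hf : Integrable f ν)
    (hf0 : 0 ≤ᵐ[ν] f) {A : Set ℝ} (hA : MeasurableSet A) :
    (ν.withDensity (fun y => ENNReal.ofReal (f y)) A).toReal = ∫ y in A, f y ∂ν := by
  rw [withDensity_apply _ hA, ← ofReal_integral_eq_lintegral_ofReal hf.restrict
    (ae_restrict_of_ae hf0), ENNReal.toReal_ofReal (integral_nonneg_of_ae (ae_restrict_of_ae hf0))]

lemma dTV_withDensity_ofReal_le {ν : Measure ℝ} {f g : ℝ → ℝ} (hf : Integrable f ν)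
    (hg : Integrable g ν) (hf0 : 0 ≤ᵐ[ν] f) (hg0 : 0 ≤ᵐ[ν] g) :
    dTV (ν.withDensity fun y => ENNReal.ofReal (f y))
        (ν.withDensity fun y => ENNReal.ofReal (g y)) ≤ ∫ y, |f y - g y| ∂ν := by
  have : Nonempty {A : Set ℝ // MeasurableSet A} := ⟨⟨∅, MeasurableSet.empty⟩⟩
  refine ciSup_le fun ⟨A, hA⟩ => ?_
  rw [toReal_withDensity_ofReal_apply hf hf0 hA, toReal_withDensity_ofReal_apply hg hg0 hA,
    ← integral_sub hf.restrict hg.restrict]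
  calc |∫ y in A, f y - g y ∂ν| ≤ ∫ y in A, |f y - g y| ∂ν := abs_integral_le_integral_abs
    _ ≤ ∫ y, |f y - g y| ∂ν :=
      setIntegral_le_integral (hf.sub hg).abs (ae_of_all _ fun _ => abs_nonneg _)

lemma gauss_eq_withDensity (m : ℝ) {v : ℝ} (hv : 0 < v) :
    gauss m v = volume.withDensity fun y => ENNReal.ofReal (gaussianPDFReal m v.toNNReal y) :=
  gaussianReal_of_var_ne_zero m (Real.toNNReal_pos.2 hv).ne'

lemma tendsto_gaussianPDFReal {ι : Type*} {l : Filter ι} {m : ι → ℝ} {v : ι → NNReal}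
    {m₀ : ℝ} {v₀ : NNReal} (hv₀ : v₀ ≠ 0) (hm : Tendsto m l (nhds m₀))
    (hv : Tendsto v l (nhds v₀)) (y : ℝ) :
    Tendsto (fun n => gaussianPDFReal (m n) (v n) y) l (nhds (gaussianPDFReal m₀ v₀ y)) := by
  have hv' : Tendsto (fun n => (v n : ℝ)) l (nhds v₀) := NNReal.tendsto_coe.2 hv
  have hv₀' : (v₀ : ℝ) ≠ 0 := NNReal.coe_ne_zero.2 hv₀
  simp only [gaussianPDFReal]
  refine ((hv'.const_mul (2 * π)).sqrt.inv₀ ?_).mul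
    ((((tendsto_const_nhds.sub hm).pow 2).neg.div (hv'.const_mul 2) ?_).rexp)
  · exact (Real.sqrt_pos.2 (by positivity)).ne'
  · positivity

theorem tendsto_dTV_gauss {ι : Type*} {l : Filter ι} [l.IsCountablyGenerated] {m v : ι → ℝ}
    {m₀ v₀ : ℝ} (hv : ∀ n, 0 < v n) (hv₀ : 0 < v₀) (hm : Tendsto m l (nhds m₀))
    (hvl : Tendsto v l (nhds v₀)) :
    Tendsto (fun n => dTV (gauss (m n) (v n)) (gauss m₀ v₀)) l (nhds 0) := by
  have hpdf0 : ∀ m w, 0 ≤ᵐ[volume] gaussianPDFReal m w :=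
    fun m w => ae_of_all _ (gaussianPDFReal_nonneg m w)
  refine squeeze_zero (fun n => dTV_nonneg _ _) (fun n => ?_)
    (tendsto_integral_abs_sub_of_tendsto_ae (fun n => hpdf0 _ _)
      (fun n => integrable_gaussianPDFReal _ _) (integrable_gaussianPDFReal _ _) (fun n => ?_)
      (ae_of_all _ (tendsto_gaussianPDFReal (Real.toNNReal_pos.2 hv₀).ne' hm
        ((continuous_real_toNNReal.tendsto v₀).comp hvl))))
  · rw [gauss_eq_withDensity _ (hv n), gauss_eq_withDensity _ hv₀]
    exact dTV_withDensity_ofReal_le (integrable_gaussianPDFReal _ _)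
      (integrable_gaussianPDFReal _ _) (hpdf0 _ _) (hpdf0 _ _)
  · rw [Function.comp_apply, integral_gaussianPDFReal_eq_one _ (Real.toNNReal_pos.2 (hv n)).ne',
      integral_gaussianPDFReal_eq_one _ (Real.toNNReal_pos.2 hv₀).ne']

lemma one_le_sigmaSq (p : ℕ) (lam : Fin p → ℂ) (t : ℕ) : 1 ≤ sigmaSq p lam t := by
  have h0 : ‖hSum p lam 0‖ ^ 2 = 1 := by
    simp [hSum, Finset.Nat.antidiagonalTuple_zero_right]
  calc (1 : ℝ) = ‖hSum p lam 0‖ ^ 2 := h0.symm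
    _ ≤ sigmaSq p lam t := Finset.single_le_sum (f := fun s => ‖hSum p lam s‖ ^ 2)
      (fun _ _ => by positivity) (Finset.mem_range.2 (Nat.succ_pos _))

/-- Strong ergodicity: under hypothesis (H) (every root of the characteristic
polynomial has modulus < 1), for every ε > 0 and every initial data, the law
N(x_t, ε²σ_t²) of the random linear recurrence converges in total variation, as
t → ∞, to the Gaussian N(0, ε²σ_∞²), whose variance ε²σ_∞² lies in [ε², +∞). -/
theorem ergodic_convergence_in_tv (p : ℕ) (φ : Fin p → ℝ)
    (lam : Fin p → ℂ)
    (hroots : ∀ z : ℂ,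
      z ^ p - ∑ i : Fin p, (φ i : ℂ) * z ^ (p - 1 - i.val) = ∏ j, (z - lam j))
    (hH : ∀ j, ‖lam j‖ < 1)
    (x : ℕ → ℝ)
    (hrec : ∀ t : ℕ, x (t + p) = ∑ i : Fin p, φ i * x (t + p - 1 - i.val))
    (ε : ℝ) (hε : 0 < ε)
    (σinf : ℝ) (hσinf : Tendsto (fun t => sigmaSq p lam t) atTop (nhds σinf)) :
    ε ^ 2 ≤ ε ^ 2 * σinf ∧
    Tendsto
      (fun t : ℕ => dTV (gauss (x t) (ε ^ 2 * sigmaSq p lam t)) (gauss 0 (ε ^ 2 * σinf)))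
      atTop (nhds 0) := by
  have hε2 : 0 < ε ^ 2 := by positivity
  have hσinf1 : 1 ≤ σinf := ge_of_tendsto' hσinf (one_le_sigmaSq p lam)
  refine ⟨le_mul_of_one_le_right hε2.le hσinf1, tendsto_dTV_gauss (fun t => ?_) ?_
    (tendsto_zero_of_linear_recurrence φ lam hroots hH x hrec) (hσinf.const_mul _)⟩
  · exact mul_pos hε2 (one_pos.trans_le (one_le_sigmaSq p lam t))
  · exact mul_pos hε2 (one_pos.trans_le hσinf1)
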